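/- arXiv:2411.18208 — 3 statements merged into one kernel-verified Lean document; each statement's English description precedes it below -/
import Mathlib

section
/- Let V be a finite-dimensional real vector space, ω : V → V → ℝ an alternating bilinear form, K = {v ∈ V | ∀ w ∈ V, ω(v, w) = 0} its kernel (as a subspace of V), and p : V →ₗ[ℝ] K a linear map with p(x) = x for all x ∈ K (a projection of V onto K). Define the bilinear form ω̃ on Ṽ = V × (Dual ℝ K) by ω̃((v, α), (w, β)) = ω(v, w) + β(p v) − α(p w). Then ω̃ is a nondegenerate alternating bilinear form on Ṽ; that is, ω̃ is a symplectic form on V × (Dual ℝ K). -/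
open Module

namespace LinearMap.BilinForm

variable {𝕜 V : Type*} [Field 𝕜] [AddCommGroup V] [Module 𝕜 V]
  {ω : V →ₗ[𝕜] V →ₗ[𝕜] 𝕜} {K : Submodule 𝕜 V} {p : V →ₗ[𝕜] K}
  {Ω : (V × Dual 𝕜 K) →ₗ[𝕜] (V × Dual 𝕜 K) →ₗ[𝕜] 𝕜}

theorem isAlt_thickening (hω : IsAlt ω)
    (hΩ : ∀ (v w : V) (α β : Dual 𝕜 K), Ω (v, α) (w, β) = ω v w + β (p v) - α (p w)) :
    IsAlt Ω := by
  rintro ⟨v, α⟩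
  rw [hΩ, hω v, zero_add, sub_self]

theorem separatingLeft_thickening (hω : IsAlt ω) (hK : ∀ v, v ∈ K ↔ ∀ w, ω v w = 0)
    (hp : ∀ x : K, p (x : V) = x)
    (hΩ : ∀ (v w : V) (α β : Dual 𝕜 K), Ω (v, α) (w, β) = ω v w + β (p v) - α (p w)) :
    Ω.SeparatingLeft := by
  rintro ⟨v, α⟩ h
  have hpv : p v = 0 := by
    refine (forall_dual_apply_eq_zero_iff 𝕜 (p v)).mp fun β => ?_
    simpa [hΩ] using h (0, β)
  have hωv : ∀ w, ω v w = α (p w) := fun w => by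
    simpa [hΩ, hpv, sub_eq_zero] using h (w, 0)
  -- For `x ∈ K`: `α x = ω v x = -ω x v = 0`.
  have hα : α = 0 := by
    ext x
    rw [LinearMap.zero_apply, ← hp x, ← hωv, ← neg_eq_zero, hω.neg_eq, (hK x).mp x.2]
  have hvK : v ∈ K := (hK v).mpr fun w => by rw [hωv, hα, LinearMap.zero_apply]
  have hv : v = 0 := by
    simpa [hpv, eq_comm] using congrArg Subtype.val (hp ⟨v, hvK⟩)
  rw [hv, hα, Prod.mk_zero_zero]

end LinearMap.BilinForm

open LinearMap.BilinForm in
theorem stmt7_general (V : Type*) [AddCommGroup V] [Module ℝ V]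
    (ω : V →ₗ[ℝ] V →ₗ[ℝ] ℝ) (hω : LinearMap.BilinForm.IsAlt ω)
    (K : Submodule ℝ V) (hK : ∀ v, v ∈ K ↔ ∀ w, ω v w = 0)
    (p : V →ₗ[ℝ] K) (hp : ∀ x : K, p (x : V) = x)
    (Ω : (V × Dual ℝ K) →ₗ[ℝ] (V × Dual ℝ K) →ₗ[ℝ] ℝ)
    (hΩ : ∀ (v w : V) (α β : Dual ℝ K),
      Ω (v, α) (w, β) = ω v w + β (p v) - α (p w)) :
    LinearMap.BilinForm.IsAlt Ω ∧ LinearMap.BilinForm.Nondegenerate Ω := by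
  have hΩalt := isAlt_thickening hω hΩ
  exact ⟨hΩalt, (LinearMap.IsRefl.nondegenerate_iff_separatingLeft hΩalt.isRefl).mpr
    (separatingLeft_thickening hω hK hp hΩ)⟩

/-- Linear symplectic thickening: if `K` is the kernel of an alternating
bilinear form `ω` on a finite-dimensional real vector space `V` and
`p : V → K` is a projection onto `K` (i.e. `p x = x` for `x ∈ K`), then the
bilinear form `Ω((v, α), (w, β)) = ω v w + β (p v) - α (p w)` on
`V × Dual ℝ K` is a nondegenerate alternating bilinear form, i.e. a
symplectic form. -/
theorem stmt7 (V : Type*) [AddCommGroup V] [Module ℝ V] [FiniteDimensional ℝ V]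
    (ω : V →ₗ[ℝ] V →ₗ[ℝ] ℝ) (hω : LinearMap.BilinForm.IsAlt ω)
    (K : Submodule ℝ V) (hK : ∀ v, v ∈ K ↔ ∀ w, ω v w = 0)
    (p : V →ₗ[ℝ] K) (hp : ∀ x : K, p (x : V) = x)
    (Ω : (V × Dual ℝ K) →ₗ[ℝ] (V × Dual ℝ K) →ₗ[ℝ] ℝ)
    (hΩ : ∀ (v w : V) (α β : Dual ℝ K),
      Ω (v, α) (w, β) = ω v w + β (p v) - α (p w)) :
    LinearMap.BilinForm.IsAlt Ω ∧ LinearMap.BilinForm.Nondegenerate Ω :=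
  stmt7_general V ω hω K hK p hp Ω hΩ
end

section
/- Let V be a finite-dimensional real vector space, ω : V → V → ℝ an alternating bilinear form, K = {v ∈ V | ∀ w ∈ V, ω(v, w) = 0} its kernel, and p : V →ₗ[ℝ] K a linear map with p(x) = x for all x ∈ K. Let ω̃ be the bilinear form on Ṽ = V × (Dual ℝ K) defined by ω̃((v, α), (w, β)) = ω(v, w) + β(p v) − α(p w). Let L = V × {0} = { (v, 0) | v ∈ V } ⊆ Ṽ. Then the ω̃-orthogonal of L, namely L^⊥ = { z ∈ Ṽ | ∀ u ∈ L, ω̃(z, u) = 0 }, equals K × {0} = { (v, 0) | v ∈ K }. In particular L^⊥ ⊆ L, i.e. L is a coisotropic subspace of the symplectic vector space (Ṽ, ω̃). -/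
open Module

/-- Coisotropy of the zero section, linear version: with `K` the kernel of the
alternating form `ω`, `p` a projection of `V` onto `K`, and
`Ω((v, α), (w, β)) = ω v w + β (p v) - α (p w)` the thickening form on
`Ṽ = V × Dual ℝ K`, the `Ω`-orthogonal of `L = { (v, 0) | v ∈ V }` equals
`{ (v, 0) | v ∈ K }`; in particular `L^⊥ ⊆ L`, i.e. `L` is coisotropic. -/
theorem stmt8 (V : Type*) [AddCommGroup V] [Module ℝ V] [FiniteDimensional ℝ V]
    (ω : V →ₗ[ℝ] V →ₗ[ℝ] ℝ) (hω : LinearMap.BilinForm.IsAlt ω)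
    (K : Submodule ℝ V) (hK : ∀ v, v ∈ K ↔ ∀ w, ω v w = 0)
    (p : V →ₗ[ℝ] K) (hp : ∀ x : K, p (x : V) = x)
    (Ω : (V × Dual ℝ K) →ₗ[ℝ] (V × Dual ℝ K) →ₗ[ℝ] ℝ)
    (hΩ : ∀ (v w : V) (α β : Dual ℝ K),
      Ω (v, α) (w, β) = ω v w + β (p v) - α (p w)) :
    {z : V × Dual ℝ K | ∀ u ∈ {u : V × Dual ℝ K | ∃ v : V, u = (v, 0)}, Ω z u = 0}
      = {z : V × Dual ℝ K | ∃ v ∈ K, z = (v, 0)} ∧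
    {z : V × Dual ℝ K | ∀ u ∈ {u : V × Dual ℝ K | ∃ v : V, u = (v, 0)}, Ω z u = 0}
      ⊆ {u : V × Dual ℝ K | ∃ v : V, u = (v, 0)} := by
  have key : {z : V × Dual ℝ K | ∀ u ∈ {u : V × Dual ℝ K | ∃ v : V, u = (v, 0)}, Ω z u = 0}
      = {z : V × Dual ℝ K | ∃ v ∈ K, z = (v, 0)} := by
    ext ⟨v, α⟩
    simp only [Set.mem_setOf_eq]
    constructor
    · intro h
      have hall : ∀ w : V, ω v w - α (p w) = 0 := by
        intro w
        have := h (w, 0) ⟨w, rfl⟩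
        rw [hΩ] at this
        simpa using this
      have hα : α = 0 := by
        ext ⟨x, hx⟩
        have h1 := hall x
        have hωx : ω v x = 0 := by
          have := (hK x).mp hx v
          have h2 := hω.neg_eq x v
          linarith [(hK x).mp hx v, h2]
        rw [hp ⟨x, hx⟩] at h1
        simpa [hωx] using h1
      have hvK : v ∈ K := by
        rw [hK]
        intro w
        have := hall w
        rw [hα] at this
        simpa using this
      exact ⟨v, hvK, by rw [hα]⟩
    · rintro ⟨u, hu, heq⟩
      rintro _ ⟨w, rfl⟩
      rw [heq, hΩ]
      simp [(hK u).mp hu w]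
  refine ⟨key, ?_⟩
  rw [key]
  rintro z ⟨v, _, rfl⟩
  exact ⟨v, rfl⟩
end

section
/- Linear Coisotropic Embedding Theorem. Let V be a finite-dimensional real vector space and ω : V → V → ℝ an alternating bilinear form (a pre-symplectic form), with kernel K = {v ∈ V | ∀ w ∈ V, ω(v, w) = 0}, and let p : V →ₗ[ℝ] K be a linear map with p(x) = x for all x ∈ K. Set Ṽ = V × (Dual ℝ K) and define ω̃((v, α), (w, β)) = ω(v, w) + β(p v) − α(p w). Let j : V →ₗ[ℝ] Ṽ be the map j(v) = (v, 0). Then: (i) ω̃ is a nondegenerate alternating bilinear form on Ṽ; (ii) j is injective and ω̃(j v, j w) = ω(v, w) for all v, w ∈ V; (iii) the ω̃-orthogonal of the range of j is contained in the range of j, i.e. the image of V in Ṽ is a coisotropic subspace. -/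
open Module

/-
The pairing between `K` and `Dual ℝ K` supplies exactly the nondegeneracy that `ω` lacks. If
`(v, α)` is `Ω`-orthogonal to everything, testing against `(y, 0)` with `y ∈ K` kills `α`
(because `ω v y = 0` and `p y = y`), testing against `(w, 0)` puts `v` in `K`, and testing
against `(0, β)` gives `p v = 0`, hence `v = p v = 0`. The first of these tests uses only
vectors of `V × 0`, so it also shows that the orthogonal of `V × 0` lies in `V × 0`.
-/

namespace PresymplecticThickening

variable {R V : Type*} [CommRing R] [AddCommGroup V] [Module R V] {K : Submodule R V}

def form (ω : V →ₗ[R] V →ₗ[R] R) (p : V →ₗ[R] K) :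
    (V × Dual R K) →ₗ[R] (V × Dual R K) →ₗ[R] R :=
  LinearMap.mk₂ R (fun x y => ω x.1 y.1 + y.2 (p x.1) - x.2 (p y.1))
    (fun _ _ _ => by simp only [Prod.fst_add, Prod.snd_add, map_add, LinearMap.add_apply]; ring)
    (fun _ _ _ => by
      simp only [Prod.smul_fst, Prod.smul_snd, map_smul, LinearMap.smul_apply, smul_eq_mul]; ring)
    (fun _ _ _ => by simp only [Prod.fst_add, Prod.snd_add, map_add, LinearMap.add_apply]; ring)
    (fun _ _ _ => by
      simp only [Prod.smul_fst, Prod.smul_snd, map_smul, LinearMap.smul_apply, smul_eq_mul]; ring)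

variable {ω : V →ₗ[R] V →ₗ[R] R} {p : V →ₗ[R] K}

@[simp]
theorem form_apply (v w : V) (α β : Dual R K) :
    form ω p (v, α) (w, β) = ω v w + β (p v) - α (p w) :=
  LinearMap.mk₂_apply _ _ _ _

theorem form_isAlt (hω : ω.IsAlt) : (form ω p).IsAlt := by
  rintro ⟨v, α⟩
  rw [form_apply, hω v]
  ring

theorem form_inl_inl (v w : V) :
    form ω p (LinearMap.inl R V _ v) (LinearMap.inl R V _ w) = ω v w := by
  simp

variable (hω : ω.IsAlt) (hK : ∀ v, v ∈ K ↔ ∀ w, ω v w = 0) (hp : ∀ x : K, p (x : V) = x)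
include hω hK hp

theorem eq_zero_of_form_apply_kernel_eq_zero {v : V} {α : Dual R K}
    (h : ∀ y : K, form ω p (v, α) (y, 0) = 0) : α = 0 := by
  ext y
  have hvy : ω v y = 0 := hω.isRefl _ _ ((hK y).1 y.2 v)
  simpa [hvy, hp] using h y

theorem form_separatingLeft [Module.Projective R K] : (form ω p).SeparatingLeft := by
  rintro ⟨v, α⟩ hx
  have hα : α = 0 := eq_zero_of_form_apply_kernel_eq_zero hω hK hp fun y => hx (y, 0)
  subst hα
  have hvK : v ∈ K := (hK v).2 fun w => by simpa using hx (w, 0)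
  have hpv : p v = 0 := (Module.forall_dual_apply_eq_zero_iff R (p v)).1 fun β => by
    simpa using hx (0, β)
  have hv : v = 0 := congrArg Subtype.val ((hp ⟨v, hvK⟩).symm.trans hpv)
  simp [hv]

theorem form_nondegenerate [Module.Projective R K] : (form ω p).Nondegenerate :=
  ((form_isAlt hω).isRefl.nondegenerate_iff_separatingLeft).2 (form_separatingLeft hω hK hp)

theorem mem_range_inl_of_form_range_inl_eq_zero {z : V × Dual R K}
    (hz : ∀ u ∈ LinearMap.range (LinearMap.inl R V (Dual R K)), form ω p z u = 0) :
    z ∈ LinearMap.range (LinearMap.inl R V (Dual R K)) := by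
  obtain ⟨v, α⟩ := z
  obtain rfl : α = 0 :=
    eq_zero_of_form_apply_kernel_eq_zero hω hK hp fun y => hz _ ⟨y, rfl⟩
  exact ⟨v, rfl⟩

end PresymplecticThickening

open PresymplecticThickening in
theorem stmt9_general (V : Type*) [AddCommGroup V] [Module ℝ V]
    (ω : V →ₗ[ℝ] V →ₗ[ℝ] ℝ) (hω : LinearMap.BilinForm.IsAlt ω)
    (K : Submodule ℝ V) (hK : ∀ v, v ∈ K ↔ ∀ w, ω v w = 0)
    (p : V →ₗ[ℝ] K) (hp : ∀ x : K, p (x : V) = x)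
    (Ω : (V × Dual ℝ K) →ₗ[ℝ] (V × Dual ℝ K) →ₗ[ℝ] ℝ)
    (hΩ : ∀ (v w : V) (α β : Dual ℝ K),
      Ω (v, α) (w, β) = ω v w + β (p v) - α (p w))
    (j : V →ₗ[ℝ] V × Dual ℝ K) (hj : ∀ v, j v = (v, 0)) :
    (LinearMap.BilinForm.IsAlt Ω ∧ LinearMap.BilinForm.Nondegenerate Ω) ∧
    (Function.Injective j ∧ ∀ v w, Ω (j v) (j w) = ω v w) ∧
    (∀ z : V × Dual ℝ K,
      (∀ u ∈ LinearMap.range j, Ω z u = 0) → z ∈ LinearMap.range j) := by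
  obtain rfl : Ω = form ω p :=
    LinearMap.ext₂ fun ⟨v, α⟩ ⟨w, β⟩ => (hΩ v w α β).trans (form_apply v w α β).symm
  obtain rfl : j = LinearMap.inl ℝ V (Dual ℝ K) := LinearMap.ext hj
  exact ⟨⟨form_isAlt hω, form_nondegenerate hω hK hp⟩,
    ⟨LinearMap.inl_injective, form_inl_inl⟩,
    fun _ => mem_range_inl_of_form_range_inl_eq_zero hω hK hp⟩

/-- Linear Coisotropic Embedding Theorem: given a pre-symplectic (alternating)
form `ω` on a finite-dimensional real vector space `V` with kernel `K`, a
projection `p : V → K` onto `K`, the thickening form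
`Ω((v, α), (w, β)) = ω v w + β (p v) - α (p w)` on `Ṽ = V × Dual ℝ K`, and the
embedding `j : V → Ṽ`, `j v = (v, 0)`, one has: (i) `Ω` is a nondegenerate
alternating form; (ii) `j` is injective and pulls `Ω` back to `ω`; (iii) the
`Ω`-orthogonal of the range of `j` is contained in the range of `j`, i.e. the
image of `V` is a coisotropic subspace of `(Ṽ, Ω)`. -/
theorem stmt9 (V : Type*) [AddCommGroup V] [Module ℝ V] [FiniteDimensional ℝ V]
    (ω : V →ₗ[ℝ] V →ₗ[ℝ] ℝ) (hω : LinearMap.BilinForm.IsAlt ω)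
    (K : Submodule ℝ V) (hK : ∀ v, v ∈ K ↔ ∀ w, ω v w = 0)
    (p : V →ₗ[ℝ] K) (hp : ∀ x : K, p (x : V) = x)
    (Ω : (V × Dual ℝ K) →ₗ[ℝ] (V × Dual ℝ K) →ₗ[ℝ] ℝ)
    (hΩ : ∀ (v w : V) (α β : Dual ℝ K),
      Ω (v, α) (w, β) = ω v w + β (p v) - α (p w))
    (j : V →ₗ[ℝ] V × Dual ℝ K) (hj : ∀ v, j v = (v, 0)) :
    (LinearMap.BilinForm.IsAlt Ω ∧ LinearMap.BilinForm.Nondegenerate Ω) ∧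
    (Function.Injective j ∧ ∀ v w, Ω (j v) (j w) = ω v w) ∧
    (∀ z : V × Dual ℝ K,
      (∀ u ∈ LinearMap.range j, Ω z u = 0) → z ∈ LinearMap.range j) :=
  stmt9_general V ω hω K hK p hp Ω hΩ j hj
end
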